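/- arXiv:1502.02727 — 3 statements merged into one kernel-verified Lean document; each statement's English description precedes it below -/
import Mathlib

section
/- For d ≥ 2 and all n ≥ 1, (pd − 1)·∑_{i=1}^{n} w_i(q,d) = p·∑_{i=0}^{d−1} (d−i)·w_{n−i}(q,d) − n. -/
/-- Weight sequence: `W p d i` = w_i(q,d) where p = q-1; w_i = 0 for i ≤ 0 (encoded by
ℕ truncated subtraction together with `W p d 0 = 0`), and w_i = 1 + p·∑_{j=1}^d w_{i-j}
for i ≥ 1. -/
def W (p d : ℕ) : ℕ → ℕ
  | 0 => 0
  | (i+1) => 1 + p * ∑ j ∈ Finset.range d, W p d (i - j)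
decreasing_by exact Nat.lt_succ_of_le (Nat.sub_le i j)

theorem weight_sum_identity (q d : ℕ) (hq : 2 ≤ q) (hd : 2 ≤ d) (n : ℕ) (hn : 1 ≤ n) :
    ((q - 1 : ℕ) * d - 1 : ℤ) * ∑ i ∈ Finset.Icc 1 n, (W (q - 1) d i : ℤ) =
      (q - 1 : ℕ) * ∑ i ∈ Finset.range d, ((d : ℤ) - i) * (W (q - 1) d (n - i) : ℤ) - n := by
  set p := q - 1 with hp
  obtain ⟨m, rfl⟩ : ∃ m, d = m + 2 := ⟨d - 2, by omega⟩
  induction n, hn using Nat.le_induction with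
  | base =>
    have hW1 : W p (m+2) 1 = 1 := by
      rw [W]
      simp [W]
    have hsum : ∑ i ∈ Finset.range (m+2), (((m+2:ℕ) : ℤ) - i) * (W p (m+2) (1 - i) : ℤ)
        = ((m+2:ℕ) : ℤ) := by
      rw [Finset.sum_range_succ' (fun i => (((m+2:ℕ):ℤ) - i) * (W p (m+2) (1 - i) : ℤ)) (m+1)]
      simp [hW1, W]
    rw [hsum]
    simp [hW1]
  | succ n hn ih =>
    have hrec : (W p (m+2) (n+1) : ℤ) = 1 + p * ∑ j ∈ Finset.range (m+2), (W p (m+2) (n-j) : ℤ) := by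
      rw [W]
      push_cast
      ring
    have hA : ∑ i ∈ Finset.range (m+2), (((m+2:ℕ):ℤ) - i) * (W p (m+2) (n+1-i) : ℤ)
        = ((m+2:ℕ):ℤ) * (W p (m+2) (n+1) : ℤ)
          + (∑ i ∈ Finset.range (m+2), (((m+2:ℕ):ℤ) - i) * (W p (m+2) (n-i) : ℤ)
             - ∑ i ∈ Finset.range (m+2), (W p (m+2) (n-i) : ℤ)) := by
      rw [Finset.sum_range_succ' (fun i => (((m+2:ℕ):ℤ) - i) * (W p (m+2) (n+1-i) : ℤ)) (m+1)]
      rw [← Finset.sum_sub_distrib]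
      rw [Finset.sum_range_succ (fun i => (((m+2:ℕ):ℤ) - i) * (W p (m+2) (n-i) : ℤ)
            - (W p (m+2) (n-i) : ℤ)) (m+1)]
      have hcongr : ∑ i ∈ Finset.range (m+1),
            (((m+2:ℕ):ℤ) - ((i+1 : ℕ):ℤ)) * (W p (m+2) (n+1-(i+1)) : ℤ)
          = ∑ i ∈ Finset.range (m+1),
            ((((m+2:ℕ):ℤ) - i) * (W p (m+2) (n-i) : ℤ) - (W p (m+2) (n-i) : ℤ)) := by
        refine Finset.sum_congr rfl fun i _ => ?_
        have : n + 1 - (i+1) = n - i := by omega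
        rw [this]
        push_cast
        ring
      rw [hcongr]
      simp only [Nat.sub_zero]
      push_cast
      ring
    rw [Finset.sum_Icc_succ_top (by omega : 1 ≤ n+1)]
    push_cast at ih hA hrec ⊢
    linear_combination ih - ((p:ℤ)) * hA - hrec
end

section
/- For d ≥ 2 and all n ≥ 1, (pd − 1)·∑_{i=1}^{n} w_i(q,d) < d·w_{n+1}(q,d). -/
open Finset

theorem sum_range_sub_add_sum_range_sub {M : Type*} [AddCommMonoid M] (f : ℕ → M)
    (hf : f 0 = 0) (n k : ℕ) :
    ∑ j ∈ range k, f (n - j) + ∑ i ∈ range (n + 1 - k), f i = ∑ i ∈ range (n + 1), f i := by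
  induction k with
  | zero => simp
  | succ k ih =>
    rw [← ih, sum_range_succ, add_assoc]
    congr 1
    rcases le_or_gt k n with hk | hk
    · rw [show n + 1 - k = n + 1 - (k + 1) + 1 by omega, sum_range_succ, add_comm,
        show n + 1 - (k + 1) = n - k by omega]
    · rw [Nat.sub_eq_zero_of_le hk.le, hf, zero_add, show n + 1 - (k + 1) = n + 1 - k by omega]

section Weight

variable (p d : ℕ)

@[simp]
theorem W_zero : W p d 0 = 0 := by
  rw [W]

theorem W_succ (i : ℕ) : W p d (i + 1) = 1 + p * ∑ j ∈ range d, W p d (i - j) := by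
  rw [W]

theorem W_monotone : Monotone (W p d) := by
  refine monotone_nat_of_le_succ fun i => ?_
  induction i using Nat.strong_induction_on with
  | _ i ih =>
    rcases i with _ | i
    · simp
    · rw [W_succ, W_succ]
      gcongr with j
      rcases le_or_gt j i with hj | hj
      · rw [show i + 1 - j = i - j + 1 by omega]
        exact ih _ (by omega)
      · simp [Nat.sub_eq_zero_of_le hj.le]

theorem mul_W_le_W_add (i : ℕ) : p * d * W p d i ≤ W p d (i + d) := by
  rcases d with _ | d
  · simp
  calc p * (d + 1) * W p _ i = p * ∑ _j ∈ range (d + 1), W p (d + 1) i := by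
        rw [sum_const, card_range, smul_eq_mul, mul_assoc]
    _ ≤ p * ∑ j ∈ range (d + 1), W p (d + 1) (i + d - j) := by
        gcongr with j hj
        exact W_monotone _ _ (by simp at hj; omega)
    _ ≤ W p (d + 1) (i + (d + 1)) := by
        rw [← add_assoc, W_succ]
        omega

theorem mul_sum_range_sub_le_sum_range (m : ℕ) :
    p * d * ∑ i ∈ range (m - d), W p d i ≤ ∑ i ∈ range m, W p d i := by
  calc p * d * ∑ i ∈ range (m - d), W p d i
      ≤ ∑ i ∈ range (m - d), W p d (i + d) := by
        rw [mul_sum]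
        exact sum_le_sum fun i _ => mul_W_le_W_add p d i
    _ = ∑ i ∈ (range (m - d)).map (addRightEmbedding d), W p d i := by
        rw [sum_map]
        rfl
    _ ≤ ∑ i ∈ range m, W p d i := by
        refine sum_le_sum_of_subset fun i hi => ?_
        simp only [mem_map, mem_range, addRightEmbedding_apply] at hi ⊢
        omega

theorem sum_Icc_one_W_eq_sum_range (n : ℕ) :
    ∑ i ∈ Icc 1 n, W p d i = ∑ i ∈ range (n + 1), W p d i := by
  rw [Nat.range_succ_eq_Icc_zero, ← add_sum_Ioc_eq_sum_Icc n.zero_le, W_zero, zero_add]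
  rfl

end Weight

theorem weight_sum_bound_general (q d : ℕ) (hd : 2 ≤ d) (n : ℕ) :
    ((q - 1) * d - 1) * ∑ i ∈ Finset.Icc 1 n, W (q - 1) d i < d * W (q - 1) d (n + 1) := by
  set p := q - 1
  rw [sum_Icc_one_W_eq_sum_range]
  set S := ∑ i ∈ range (n + 1), W p d i
  set T := ∑ j ∈ range d, W p d (n - j)
  set B := ∑ i ∈ range (n + 1 - d), W p d i
  have hS : T + B = S := sum_range_sub_add_sum_range_sub _ (W_zero p d) n d
  have hB : p * d * B ≤ S := mul_sum_range_sub_le_sum_range p d (n + 1)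
  have hW : d * W p d (n + 1) = d + p * d * T := by
    rw [W_succ]
    ring
  have hST : p * d * S = p * d * T + p * d * B := by
    rw [← hS, mul_add]
  rw [Nat.sub_one_mul, hW]
  omega

theorem weight_sum_bound (q d : ℕ) (hq : 2 ≤ q) (hd : 2 ≤ d) (n : ℕ) (hn : 1 ≤ n) :
    ((q - 1) * d - 1) * ∑ i ∈ Finset.Icc 1 n, W (q - 1) d i < d * W (q - 1) d (n + 1) :=
  weight_sum_bound_general q d hd n
end

section
/- Replacement lemma: Let x, y be words of length n over {0,…,q−1} with M(x) ≡ M(y) (mod m) and x^{(D)} = y^{(E)} for some D, E ⊆ {1,…,n} with |D| = |E| ≤ d. Suppose there is an index L with x_L = y_L > 0 and x_i = y_i = 0 for all i > L. Then the words x̃, ỹ obtained from x, y by setting position L to 0 (and leaving all other positions unchanged) satisfy M(x̃) ≡ M(ỹ) (mod m) and x̃^{(D̃)} = ỹ^{(Ẽ)} for some sets D̃, Ẽ with |D̃| = |D| and |Ẽ| = |E|. -/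
/-- Moment of a word (1-indexed): M(x) = ∑_{i=1}^{n} w_i x_i. -/
def moment (w : ℕ → ℕ) (x : List ℕ) : ℕ :=
  ∑ i ∈ Finset.range x.length, w (i + 1) * x.getD i 0

/-- Deleted word x^{(D)}: delete the symbols at the (1-indexed) positions in D,
keeping the remaining symbols in order. -/
def deleteD (x : List ℕ) (D : Finset ℕ) : List ℕ :=
  ((List.range x.length).filter (fun i => (i + 1) ∉ D)).map (fun i => x.getD i 0)

theorem moment_eq_moment_set_add (w : ℕ → ℕ) {x : List ℕ} {k : ℕ} (hk : k < x.length) :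
    moment w x = moment w (x.set k 0) + w (k + 1) * x.getD k 0 := by
  have hk' := Finset.mem_range.2 hk
  rw [moment, moment, List.length_set, ← Finset.sum_erase_add _ _ hk',
    ← Finset.sum_erase_add _ _ hk']
  have hset : (x.set k 0).getD k 0 = 0 := by simp [List.getD_eq_getElem?_getD, hk]
  rw [hset, mul_zero, add_zero]
  congr 1
  refine Finset.sum_congr rfl fun i hi => ?_
  rw [List.getD_eq_getElem?_getD, List.getD_eq_getElem?_getD,
    List.getElem?_set_ne (Finset.ne_of_mem_erase hi).symm]

def dropTrailingZeros (l : List ℕ) : List ℕ := l.rdropWhile (· == 0)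

theorem dropTrailingZeros_append_of_forall_eq_zero (l : List ℕ) {t : List ℕ}
    (ht : ∀ b ∈ t, b = 0) : dropTrailingZeros (l ++ t) = dropTrailingZeros l := by
  induction t using List.reverseRecOn with
  | nil => rw [List.append_nil]
  | append_singleton t b ih =>
    rw [← List.append_assoc, dropTrailingZeros, List.rdropWhile_concat_pos _ _ _ (by simp [ht b])]
    exact ih fun a ha => ht a (List.mem_append_left _ ha)

theorem dropTrailingZeros_append_cons (l : List ℕ) {c : ℕ} (hc : c ≠ 0) {t : List ℕ}
    (ht : ∀ b ∈ t, b = 0) : dropTrailingZeros (l ++ c :: t) = l ++ [c] := by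
  rw [← List.singleton_append, ← List.append_assoc, dropTrailingZeros_append_of_forall_eq_zero _ ht,
    dropTrailingZeros, List.rdropWhile_concat_neg _ _ _ (by simpa using hc)]

theorem exists_eq_dropTrailingZeros_append (l : List ℕ) :
    ∃ r : List ℕ, (∀ b ∈ r, b = 0) ∧ l = dropTrailingZeros l ++ r :=
  ⟨l.rtakeWhile (· == 0), fun _ hb => by simpa using List.mem_rtakeWhile_imp hb,
    List.rdropWhile_append_rtakeWhile.symm⟩

theorem eq_of_dropTrailingZeros_eq {l l' : List ℕ} (hlen : l.length = l'.length)
    (h : dropTrailingZeros l = dropTrailingZeros l') : l = l' := by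
  obtain ⟨r, hr, hl⟩ := exists_eq_dropTrailingZeros_append l
  obtain ⟨r', hr', hl'⟩ := exists_eq_dropTrailingZeros_append l'
  have hrr : r.length = r'.length := by
    rw [hl, hl', h, List.length_append, List.length_append] at hlen
    omega
  rw [hl, hl', h, List.eq_replicate_of_mem hr, List.eq_replicate_of_mem hr', hrr]

theorem map_getD_range (x : List ℕ) : (List.range x.length).map (fun i => x.getD i 0) = x :=
  List.ext_getElem (by simp) fun i h _ => by simp_all

theorem deleteD_sublist (x : List ℕ) (S : Finset ℕ) : (deleteD x S).Sublist x := by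
  conv_rhs => rw [← map_getD_range x]
  exact (List.filter_sublist).map _

theorem length_deleteD {x : List ℕ} {S : Finset ℕ} (hS : S ⊆ Finset.Icc 1 x.length) :
    (deleteD x S).length = x.length - S.card := by
  have hkept : (deleteD x S).length = ((Finset.range x.length).filter (· + 1 ∉ S)).card := by
    rw [deleteD, List.length_map]
    rfl
  have hdel : ((Finset.range x.length).filter (· + 1 ∈ S)).card = S.card := by
    have hbounds {i} (hi : i ∈ S) : 1 ≤ i ∧ i ≤ x.length := Finset.mem_Icc.1 (hS hi)
    refine Finset.card_nbij' (· + 1) (· - 1) (fun i hi => (Finset.mem_filter.1 hi).2)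
      (fun i hi => ?_) (fun i _ => rfl) (fun i hi => Nat.sub_add_cancel (hbounds hi).1)
    have := hbounds hi
    dsimp only
    exact Finset.mem_filter.2 ⟨Finset.mem_range.2 (by omega), by rwa [Nat.sub_add_cancel this.1]⟩
  have := Finset.card_filter_add_card_filter_not (s := Finset.range x.length) (· + 1 ∈ S)
  rw [Finset.card_range] at this
  omega

theorem deleteD_congr {x : List ℕ} {S T : Finset ℕ}
    (h : ∀ i, 1 ≤ i → i ≤ x.length → (i ∈ S ↔ i ∈ T)) : deleteD x S = deleteD x T := by
  unfold deleteD
  congr 1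
  refine List.filter_congr fun i hi => ?_
  have := List.mem_range.1 hi
  simp [h (i + 1) (by omega) (by omega)]

theorem exists_deleteD_insert_eq {x P Q : List ℕ} {S : Finset ℕ} {c : ℕ}
    (h : deleteD x S = P ++ c :: Q) :
    ∃ p ∈ Finset.Icc 1 x.length, p ∉ S ∧ deleteD x (insert p S) = P ++ Q := by
  obtain ⟨l₁, l₂, hsplit, hP, hl₂⟩ := List.map_eq_append_iff.1 h
  obtain ⟨i, l₃, rfl, -, hQ⟩ := List.map_eq_cons_iff.1 hl₂
  have hi : i ∈ (List.range x.length).filter (fun i => i + 1 ∉ S) := by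
    rw [hsplit]; exact List.mem_append_right _ List.mem_cons_self
  obtain ⟨hix, hiS⟩ := List.mem_filter.1 hi
  have hnodup : (l₁ ++ i :: l₃).Nodup := hsplit ▸ List.nodup_range.filter _
  have hkept : (List.range x.length).filter (fun j => j + 1 ∉ insert (i + 1) S)
      = ((List.range x.length).filter (fun i => i + 1 ∉ S)).filter (fun j => j != i) := by
    rw [List.filter_filter]
    refine List.filter_congr fun j _ => ?_
    by_cases hj : j = i <;> simp [hj]
  refine ⟨i + 1, Finset.mem_Icc.2 ⟨by omega, List.mem_range.1 hix⟩, by simpa using hiS, ?_⟩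
  rw [deleteD, hkept, ← (List.nodup_range.filter _).erase_eq_filter, hsplit,
    List.erase_append_right _ (List.disjoint_of_nodup_append hnodup · List.mem_cons_self),
    List.erase_cons_head, List.map_append, hP, hQ]

theorem mem_image_tsub_iff {S : Finset ℕ} {i : ℕ} (k : ℕ) (hi : 0 < i) :
    i ∈ S.image (· - k) ↔ k + i ∈ S := by
  simp only [Finset.mem_image]
  refine ⟨fun ⟨j, hj, hji⟩ => ?_, fun h => ⟨_, h, by omega⟩⟩
  rwa [show k + i = j by omega]

-- `S.image (· - u.length)` renumbers the positions of `S` that lie in `v`; the positions in `u`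
-- all become `0`, which is never a position.
theorem deleteD_append (u v : List ℕ) (S : Finset ℕ) :
    deleteD (u ++ v) S = deleteD u S ++ deleteD v (S.image (· - u.length)) := by
  unfold deleteD
  rw [List.length_append, List.range_add, List.filter_append, List.map_append, List.filter_map,
    List.map_map]
  congr 1
  · refine List.map_congr_left fun i hi => ?_
    exact List.getD_append _ _ _ _ (List.mem_range.1 (List.mem_of_mem_filter hi))
  · rw [List.filter_congr (q := fun i => decide (i + 1 ∉ S.image (· - u.length)))
      fun i _ => by simp only [Function.comp_apply, mem_image_tsub_iff _ i.succ_pos, Nat.add_assoc]]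
    refine List.map_congr_left fun i _ => ?_
    simp [List.getElem?_append_right]

theorem deleteD_singleton (a : ℕ) (S : Finset ℕ) :
    deleteD [a] S = if 1 ∈ S then [] else [a] := by
  by_cases h : 1 ∈ S <;> simp [deleteD, h]

theorem deleteD_append_cons (u : List ℕ) (a : ℕ) (s : List ℕ) (S : Finset ℕ) :
    deleteD (u ++ a :: s) S = deleteD u S ++
      ((if u.length + 1 ∈ S then [] else [a]) ++ deleteD s (S.image (· - (u.length + 1)))) := by
  rw [← List.singleton_append, ← List.append_assoc, deleteD_append, deleteD_append,
    deleteD_singleton]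
  simp only [mem_image_tsub_iff _ one_pos, List.append_assoc, List.length_append,
    List.length_singleton]

theorem deleteD_append_cons_of_mem {u s : List ℕ} {S : Finset ℕ} (h : u.length + 1 ∈ S)
    (a b : ℕ) : deleteD (u ++ a :: s) S = deleteD (u ++ b :: s) S := by
  simp only [deleteD_append_cons, if_pos h]

theorem dropTrailingZeros_deleteD_append (u : List ℕ) {s : List ℕ} (hs : ∀ b ∈ s, b = 0)
    (S : Finset ℕ) : dropTrailingZeros (deleteD (u ++ s) S) = dropTrailingZeros (deleteD u S) := by
  rw [deleteD_append, dropTrailingZeros_append_of_forall_eq_zero _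
    fun b hb => hs b ((deleteD_sublist _ _).subset hb)]

theorem dropTrailingZeros_deleteD_append_cons (u : List ℕ) {c : ℕ} (hc : c ≠ 0) {s : List ℕ}
    (hs : ∀ b ∈ s, b = 0) {S : Finset ℕ} (h : u.length + 1 ∉ S) :
    dropTrailingZeros (deleteD (u ++ c :: s) S) = deleteD u S ++ [c] := by
  rw [deleteD_append_cons, if_neg h, List.singleton_append,
    dropTrailingZeros_append_cons _ hc fun b hb => hs b ((deleteD_sublist _ _).subset hb)]

theorem deleteD_eq_of_dropTrailingZeros_eq {x y : List ℕ} {n : ℕ} {D E : Finset ℕ}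
    (hx : x.length = n) (hy : y.length = n) (hD : D ⊆ Finset.Icc 1 n) (hE : E ⊆ Finset.Icc 1 n)
    (hcard : D.card = E.card)
    (h : dropTrailingZeros (deleteD x D) = dropTrailingZeros (deleteD y E)) :
    deleteD x D = deleteD y E := by
  subst hx
  refine eq_of_dropTrailingZeros_eq ?_ h
  rw [length_deleteD hD, length_deleteD (hy ▸ hE), hy, hcard]

section ReplaceLastNonzero

variable {u v s t : List ℕ} {c n : ℕ} {D E : Finset ℕ}

theorem deleteD_append_cons_zero_eq_of_not_mem (hc : c ≠ 0) (hs : ∀ b ∈ s, b = 0)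
    (ht : ∀ b ∈ t, b = 0) (huv : u.length = v.length) (hx : (u ++ c :: s).length = n)
    (hy : (v ++ c :: t).length = n) (hD : D ⊆ Finset.Icc 1 n) (hE : E ⊆ Finset.Icc 1 n)
    (hcard : D.card = E.card) (hLD : u.length + 1 ∉ D) (hLE : u.length + 1 ∉ E)
    (hdel : deleteD (u ++ c :: s) D = deleteD (v ++ c :: t) E) :
    deleteD (u ++ 0 :: s) D = deleteD (v ++ 0 :: t) E := by
  have hprefix : deleteD u D = deleteD v E := by
    have h := congrArg dropTrailingZeros hdel
    rwa [dropTrailingZeros_deleteD_append_cons _ hc hs hLD,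
      dropTrailingZeros_deleteD_append_cons _ hc ht (huv ▸ hLE), List.append_cancel_right_eq] at h
  refine deleteD_eq_of_dropTrailingZeros_eq (by simpa using hx) (by simpa using hy) hD hE hcard ?_
  rw [dropTrailingZeros_deleteD_append _ (List.forall_mem_cons.2 ⟨rfl, hs⟩),
    dropTrailingZeros_deleteD_append _ (List.forall_mem_cons.2 ⟨rfl, ht⟩), hprefix]

theorem exists_deleteD_append_cons_zero_eq_of_mem_of_not_mem (hc : c ≠ 0)
    (hs : ∀ b ∈ s, b = 0) (ht : ∀ b ∈ t, b = 0) (huv : u.length = v.length)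
    (hx : (u ++ c :: s).length = n) (hy : (v ++ c :: t).length = n) (hD : D ⊆ Finset.Icc 1 n)
    (hE : E ⊆ Finset.Icc 1 n) (hcard : D.card = E.card) (hLD : u.length + 1 ∈ D)
    (hLE : u.length + 1 ∉ E) (hdel : deleteD (u ++ c :: s) D = deleteD (v ++ c :: t) E) :
    ∃ D', D' ⊆ Finset.Icc 1 n ∧ D'.card = D.card ∧
      deleteD (u ++ 0 :: s) D' = deleteD (v ++ 0 :: t) E := by
  have hs₀ : ∀ b ∈ 0 :: s, b = 0 := List.forall_mem_cons.2 ⟨rfl, hs⟩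
  have hprefix : dropTrailingZeros (deleteD u D) = deleteD v E ++ [c] := by
    rw [← dropTrailingZeros_deleteD_append u hs₀, deleteD_append_cons_of_mem hLD 0 c, hdel,
      dropTrailingZeros_deleteD_append_cons _ hc ht (huv ▸ hLE)]
  obtain ⟨r, hr, hur⟩ := exists_eq_dropTrailingZeros_append (deleteD u D)
  rw [hprefix, List.append_assoc, List.singleton_append] at hur
  obtain ⟨p, hp, hpD, hdelp⟩ := exists_deleteD_insert_eq hur
  rw [Finset.mem_Icc] at hp
  have hD'sub : insert p (D.erase (u.length + 1)) ⊆ Finset.Icc 1 n :=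
    Finset.insert_subset_iff.2 ⟨Finset.mem_Icc.2 ⟨hp.1, by simp at hx; omega⟩,
      (Finset.erase_subset _ _).trans hD⟩
  have hD'card : (insert p (D.erase (u.length + 1))).card = D.card := by
    rw [Finset.card_insert_of_notMem (fun h => hpD (Finset.mem_of_mem_erase h)),
      Finset.card_erase_add_one hLD]
  refine ⟨_, hD'sub, hD'card, deleteD_eq_of_dropTrailingZeros_eq (by simpa using hx)
    (by simpa using hy) hD'sub hE (hD'card.trans hcard) ?_⟩
  calc dropTrailingZeros (deleteD (u ++ 0 :: s) (insert p (D.erase (u.length + 1))))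
      = dropTrailingZeros (deleteD u (insert p D)) := by
        rw [dropTrailingZeros_deleteD_append u hs₀]
        congr 1
        refine deleteD_congr fun i _ hi => ?_
        have : i ≠ u.length + 1 := by omega
        simp only [Finset.mem_insert, Finset.mem_erase, ne_eq, this, not_false_eq_true, true_and]
    _ = dropTrailingZeros (deleteD v E) := by
        rw [hdelp, dropTrailingZeros_append_of_forall_eq_zero _ hr]
    _ = dropTrailingZeros (deleteD (v ++ 0 :: t) E) :=
        (dropTrailingZeros_deleteD_append v (List.forall_mem_cons.2 ⟨rfl, ht⟩) E).symm

theorem exists_deleteD_append_cons_zero_eq (hc : c ≠ 0) (hs : ∀ b ∈ s, b = 0)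
    (ht : ∀ b ∈ t, b = 0) (huv : u.length = v.length) (hx : (u ++ c :: s).length = n)
    (hy : (v ++ c :: t).length = n) (hD : D ⊆ Finset.Icc 1 n) (hE : E ⊆ Finset.Icc 1 n)
    (hcard : D.card = E.card) (hdel : deleteD (u ++ c :: s) D = deleteD (v ++ c :: t) E) :
    ∃ D' E' : Finset ℕ, D' ⊆ Finset.Icc 1 n ∧ E' ⊆ Finset.Icc 1 n ∧
      D'.card = D.card ∧ E'.card = E.card ∧ deleteD (u ++ 0 :: s) D' = deleteD (v ++ 0 :: t) E' := by
  by_cases hLD : u.length + 1 ∈ D <;> by_cases hLE : u.length + 1 ∈ E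
  · refine ⟨D, E, hD, hE, rfl, rfl, ?_⟩
    rw [deleteD_append_cons_of_mem hLD 0 c, hdel, deleteD_append_cons_of_mem (huv ▸ hLE) c 0]
  · obtain ⟨D', hD', hcard', h⟩ := exists_deleteD_append_cons_zero_eq_of_mem_of_not_mem
      hc hs ht huv hx hy hD hE hcard hLD hLE hdel
    exact ⟨D', E, hD', hE, hcard', rfl, h⟩
  · obtain ⟨E', hE', hcard', h⟩ := exists_deleteD_append_cons_zero_eq_of_mem_of_not_mem
      hc ht hs huv.symm hy hx hE hD hcard.symm (huv ▸ hLE) (huv ▸ hLD) hdel.symm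
    exact ⟨D, E', hD, hE', rfl, hcard', h.symm⟩
  · exact ⟨D, E, hD, hE, rfl, rfl,
      deleteD_append_cons_zero_eq_of_not_mem hc hs ht huv hx hy hD hE hcard hLD hLE hdel⟩

end ReplaceLastNonzero

theorem forall_mem_drop_eq_zero {z : List ℕ} {k : ℕ}
    (h : ∀ i, k < i → i < z.length → z.getD i 0 = 0) : ∀ b ∈ z.drop (k + 1), b = 0 := by
  intro b hb
  obtain ⟨j, hj, rfl⟩ := List.mem_drop_iff_getElem.1 hb
  rw [← List.getD_eq_getElem _ 0]
  exact h _ (by omega) (by omega)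

theorem replacement_lemma_general (q d n m : ℕ)
    (x y : List ℕ) (hxlen : x.length = n) (hylen : y.length = n)
    (hcong : moment (W (q - 1) d) x ≡ moment (W (q - 1) d) y [MOD m])
    (D E : Finset ℕ) (hD : D ⊆ Finset.Icc 1 n) (hE : E ⊆ Finset.Icc 1 n)
    (hcard : D.card = E.card)
    (hdel : deleteD x D = deleteD y E)
    (L : ℕ)
    (hxy : x.getD (L - 1) 0 = y.getD (L - 1) 0) (hpos : 0 < x.getD (L - 1) 0)
    (hzero : ∀ i, L < i → i ≤ n → x.getD (i - 1) 0 = 0 ∧ y.getD (i - 1) 0 = 0) :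
    moment (W (q - 1) d) (x.set (L - 1) 0) ≡ moment (W (q - 1) d) (y.set (L - 1) 0) [MOD m] ∧
    ∃ D' E' : Finset ℕ, D' ⊆ Finset.Icc 1 n ∧ E' ⊆ Finset.Icc 1 n ∧
      D'.card = D.card ∧ E'.card = E.card ∧
      deleteD (x.set (L - 1) 0) D' = deleteD (y.set (L - 1) 0) E' := by
  have hc : x.getD (L - 1) 0 ≠ 0 := hpos.ne'
  have hkx : L - 1 < x.length := lt_of_not_ge fun h => hc (List.getD_eq_default _ _ h)
  have hky : L - 1 < y.length := lt_of_not_ge fun h => hc (hxy ▸ List.getD_eq_default _ _ h)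
  constructor
  · rw [moment_eq_moment_set_add _ hkx, moment_eq_moment_set_add _ hky, hxy] at hcong
    exact Nat.ModEq.add_right_cancel' _ hcong
  · have hsplit (z : List ℕ) (hz : L - 1 < z.length) (a : ℕ) :
        z.set (L - 1) a = z.take (L - 1) ++ a :: z.drop (L - 1 + 1) := by
      rw [List.set_eq_take_append_cons_drop, if_pos hz]
    have hxsplit : x = x.take (L - 1) ++ x.getD (L - 1) 0 :: x.drop (L - 1 + 1) := by
      rw [← hsplit x hkx, List.getD_eq_getElem _ _ hkx, List.set_getElem_self]
    have hysplit : y = y.take (L - 1) ++ x.getD (L - 1) 0 :: y.drop (L - 1 + 1) := by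
      rw [← hsplit y hky, hxy, List.getD_eq_getElem _ _ hky, List.set_getElem_self]
    have htail : ∀ i, L - 1 < i → i < n → x.getD i 0 = 0 ∧ y.getD i 0 = 0 := fun i h₁ h₂ => by
      simpa using hzero (i + 1) (by omega) (by omega)
    rw [hxsplit, hysplit] at hdel
    rw [hsplit x hkx, hsplit y hky]
    exact exists_deleteD_append_cons_zero_eq hc
      (forall_mem_drop_eq_zero fun i h₁ h₂ => (htail i h₁ (hxlen ▸ h₂)).1)
      (forall_mem_drop_eq_zero fun i h₁ h₂ => (htail i h₁ (hylen ▸ h₂)).2)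
      (by simp only [List.length_take]; omega) (by rw [← hxsplit, hxlen])
      (by rw [← hysplit, hylen]) hD hE hcard hdel

theorem replacement_lemma (q d n m : ℕ) (hq : 2 ≤ q) (hd : 1 ≤ d) (hmpos : 0 < m)
    (x y : List ℕ) (hxlen : x.length = n) (hylen : y.length = n)
    (hx : ∀ a ∈ x, a < q) (hy : ∀ a ∈ y, a < q)
    (hcong : moment (W (q - 1) d) x ≡ moment (W (q - 1) d) y [MOD m])
    (D E : Finset ℕ) (hD : D ⊆ Finset.Icc 1 n) (hE : E ⊆ Finset.Icc 1 n)
    (hcard : D.card = E.card) (hd' : D.card ≤ d)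
    (hdel : deleteD x D = deleteD y E)
    (L : ℕ) (hL1 : 1 ≤ L) (hLn : L ≤ n)
    (hxy : x.getD (L - 1) 0 = y.getD (L - 1) 0) (hpos : 0 < x.getD (L - 1) 0)
    (hzero : ∀ i, L < i → i ≤ n → x.getD (i - 1) 0 = 0 ∧ y.getD (i - 1) 0 = 0) :
    moment (W (q - 1) d) (x.set (L - 1) 0) ≡ moment (W (q - 1) d) (y.set (L - 1) 0) [MOD m] ∧
    ∃ D' E' : Finset ℕ, D' ⊆ Finset.Icc 1 n ∧ E' ⊆ Finset.Icc 1 n ∧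
      D'.card = D.card ∧ E'.card = E.card ∧
      deleteD (x.set (L - 1) 0) D' = deleteD (y.set (L - 1) 0) E' :=
  replacement_lemma_general q d n m x y hxlen hylen hcong D E hD hE hcard hdel L hxy hpos hzero
end
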